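/- Let f be a homeomorphism of a compact metric space (X,d), let n be a positive integer, and suppose f is n-expansive with n-expansive constant c. If z ∈ X and l ≥ 1 are such that d(f^{m+kl}(z), f^m(z)) ≤ c for every m ∈ ℤ and every k ∈ ℤ, then z is a periodic point of f. -/
import Mathlib


open Metric Filter Set

variable {X : Type*} [MetricSpace X]

/-- The iterate of a homeomorphism by an integer power. -/
def hIter (f : X ≃ₜ X) (k : ℤ) (x : X) : X := (f.toEquiv ^ k) x

/-- The local stable set of `x` of size `c`:
points whose forward iterates stay `c`-close to those of `x`. -/
def localStable (f : X ≃ₜ X) (c : ℝ) (x : X) : Set X :=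
  {y | ∀ k : ℕ, dist ((⇑f)^[k] y) ((⇑f)^[k] x) ≤ c}

/-- The local unstable set of `x` of size `c`:
points whose backward iterates stay `c`-close to those of `x`. -/
def localUnstable (f : X ≃ₜ X) (c : ℝ) (x : X) : Set X :=
  {y | ∀ k : ℕ, dist ((⇑f.symm)^[k] y) ((⇑f.symm)^[k] x) ≤ c}

/-- The stable set of `x`. -/
def stableSet (f : X ≃ₜ X) (x : X) : Set X :=
  {y | Tendsto (fun k : ℕ => dist ((⇑f)^[k] y) ((⇑f)^[k] x)) atTop (nhds 0)}

/-- The unstable set of `x`. -/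
def unstableSet (f : X ≃ₜ X) (x : X) : Set X :=
  {y | Tendsto (fun k : ℕ => dist ((⇑f.symm)^[k] y) ((⇑f.symm)^[k] x)) atTop (nhds 0)}

/-- `f` is positively `n`-expansive: for some `c > 0` every local stable set of
size `c` contains at most `n` points. -/
def PosNExpansive (f : X ≃ₜ X) (n : ℕ) : Prop :=
  ∃ c > 0, ∀ x : X, ∀ S : Finset X, ↑S ⊆ localStable f c x → S.card ≤ n

/-- `f` is `n`-expansive: for some `c > 0` every dynamical ball of size `c`
contains at most `n` points. -/
def NExpansive (f : X ≃ₜ X) (n : ℕ) : Prop :=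
  ∃ c > 0, ∀ x : X, ∀ S : Finset X,
    ↑S ⊆ localStable f c x ∩ localUnstable f c x → S.card ≤ n

/-- `f` is expansive. -/
def Expansive (f : X ≃ₜ X) : Prop :=
  ∃ c > 0, ∀ x y : X, (∀ k : ℤ, dist (hIter f k x) (hIter f k y) ≤ c) → x = y

/-- `(x_k)_{k ∈ ℤ}` is a `δ`-pseudo-orbit. -/
def IsPseudoOrbit (f : X ≃ₜ X) (δ : ℝ) (x : ℤ → X) : Prop :=
  ∀ k : ℤ, dist (f (x k)) (x (k + 1)) < δ

/-- `(x_k)_{k ∈ ℤ}` is a two-sided limit pseudo-orbit: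
`d(f(x_k), x_{k+1}) → 0` as `|k| → ∞`. -/
def IsTwoSidedLimitPseudoOrbit (f : X ≃ₜ X) (x : ℤ → X) : Prop :=
  Tendsto (fun k : ℤ => dist (f (x k)) (x (k + 1))) cofinite (nhds 0)

/-- `z` `ε`-shadows the sequence `(x_k)_{k ∈ ℤ}`. -/
def Shadows (f : X ≃ₜ X) (ε : ℝ) (z : X) (x : ℤ → X) : Prop :=
  ∀ k : ℤ, dist (hIter f k z) (x k) < ε

/-- `z` two-sided limit shadows `(x_k)_{k ∈ ℤ}`. -/
def TwoSidedLimitShadows (f : X ≃ₜ X) (z : X) (x : ℤ → X) : Prop :=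
  Tendsto (fun k : ℤ => dist (hIter f k z) (x k)) cofinite (nhds 0)

/-- The shadowing property. -/
def ShadowingProperty (f : X ≃ₜ X) : Prop :=
  ∀ ε > 0, ∃ δ > 0, ∀ x : ℤ → X, IsPseudoOrbit f δ x → ∃ z : X, Shadows f ε z x

/-- The L-shadowing property. -/
def LShadowingProperty (f : X ≃ₜ X) : Prop :=
  ∀ ε > 0, ∃ δ > 0, ∀ x : ℤ → X, IsPseudoOrbit f δ x →
    IsTwoSidedLimitPseudoOrbit f x →
    ∃ z : X, Shadows f ε z x ∧ TwoSidedLimitShadows f z x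

/-- Topological transitivity. -/
def TopTransitive (f : X ≃ₜ X) : Prop :=
  ∀ U V : Set X, IsOpen U → IsOpen V → U.Nonempty → V.Nonempty →
    ∃ k : ℕ, ((⇑f)^[k] '' U ∩ V).Nonempty

/-- There is a nontrivial finite `ε`-pseudo-orbit from `x` to `y`. -/
def ChainFrom (f : X ≃ₜ X) (ε : ℝ) (x y : X) : Prop :=
  ∃ (l : ℕ) (c : ℕ → X), 0 < l ∧ c 0 = x ∧ c l = y ∧
    ∀ k < l, dist (f (c k)) (c (k + 1)) < ε

/-- `x` is a chain recurrent point of `f`. -/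
def ChainRecurrent (f : X ≃ₜ X) (x : X) : Prop :=
  ∀ ε > 0, ChainFrom f ε x x

/-- The chain recurrent class of `x`. -/
def chainClass (f : X ≃ₜ X) (x : X) : Set X :=
  {y | ∀ ε > 0, ChainFrom f ε x y ∧ ChainFrom f ε y x}

/-- `x` is a periodic point of `f`. -/
def Periodic (f : X ≃ₜ X) (x : X) : Prop :=
  ∃ k : ℕ, 1 ≤ k ∧ (⇑f)^[k] x = x

/-- `x` is a non-wandering point of `f`. -/
def NonWandering (f : X ≃ₜ X) (x : X) : Prop :=
  ∀ U : Set X, IsOpen U → x ∈ U → ∃ k : ℕ, 0 < k ∧ ((⇑f)^[k] '' U ∩ U).Nonempty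

/-- The omega limit set of `x`: accumulation points of the forward orbit. -/
def omegaLimitSet (f : X ≃ₜ X) (x : X) : Set X :=
  {y | ∃ φ : ℕ → ℕ, StrictMono φ ∧ Tendsto (fun n => (⇑f)^[φ n] x) atTop (nhds y)}

/-- `z` two-sided limit shadows `(x_k)` with gap `K`. -/
def TwoSidedLimitShadowsWithGap (f : X ≃ₜ X) (K : ℤ) (z : X) (x : ℤ → X) : Prop :=
  Tendsto (fun k : ℤ => dist (hIter f k z) (x k)) atBot (nhds 0) ∧
  Tendsto (fun k : ℤ => dist (hIter f (K + k) z) (x k)) atTop (nhds 0)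

lemma hIter_add (f : X ≃ₜ X) (a b : ℤ) (x : X) :
    hIter f (a + b) x = hIter f a (hIter f b x) := by
  simp [hIter, zpow_add]

lemma hIter_natCast (f : X ≃ₜ X) (k : ℕ) (x : X) :
    hIter f (k : ℤ) x = (⇑f)^[k] x := by
  simp only [hIter, zpow_natCast]
  induction k with
  | zero => rfl
  | succ m ih =>
    rw [pow_succ', Function.iterate_succ']
    simp [Equiv.Perm.mul_apply, ih]

lemma hIter_neg_natCast (f : X ≃ₜ X) (k : ℕ) (x : X) :
    hIter f (-(k : ℤ)) x = (⇑f.symm)^[k] x := by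
  simp only [hIter, zpow_neg, zpow_natCast]
  induction k with
  | zero => rfl
  | succ m ih =>
    rw [pow_succ, Function.iterate_succ']
    simp only [mul_inv_rev, Equiv.Perm.mul_apply] at *
    rw [ih]
    rfl

theorem stmt14 {X : Type*} [MetricSpace X] [CompactSpace X] (f : X ≃ₜ X) (n : ℕ)
    (hn : 0 < n) (c : ℝ) (hc : 0 < c)
    (hexp : ∀ x : X, ∀ S : Finset X,
      ↑S ⊆ localStable f c x ∩ localUnstable f c x → S.card ≤ n)
    (z : X) (l : ℤ) (hl : 1 ≤ l)
    (h : ∀ m k : ℤ, dist (hIter f (m + k * l) z) (hIter f m z) ≤ c) :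
    Periodic f z := by
  classical
  -- the points f^{jl} z all lie in the dynamical c-ball of z
  have hmem : ∀ j : ℤ, hIter f (j * l) z ∈
      localStable f c z ∩ localUnstable f c z := by
    intro j
    constructor
    · intro k
      have := h (k : ℤ) j
      rw [hIter_add] at this
      rw [hIter_natCast] at this
      have h0 : hIter f (k : ℤ) z = (⇑f)^[k] z := hIter_natCast f k z
      rwa [h0] at this
    · intro k
      have := h (-(k : ℤ)) j
      rw [hIter_add] at this
      rw [hIter_neg_natCast] at this
      have h0 : hIter f (-(k : ℤ)) z = (⇑f.symm)^[k] z := hIter_neg_natCast f k z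
      rwa [h0] at this
  -- pigeonhole: among j = 0..n the points f^{jl}z can't all be distinct
  set g : ℕ → X := fun j => hIter f ((j : ℤ) * l) z with hg
  have hcardlt : ((Finset.range (n + 1)).image g).card < (Finset.range (n + 1)).card := by
    have hsub : ↑((Finset.range (n + 1)).image g) ⊆
        localStable f c z ∩ localUnstable f c z := by
      intro y hy
      simp only [Finset.coe_image, Set.mem_image] at hy
      obtain ⟨j, _, rfl⟩ := hy
      exact hmem j
    have := hexp z ((Finset.range (n + 1)).image g) hsub
    simp only [Finset.card_range]
    omega
  obtain ⟨i, hi, j, hj, hij, heq⟩ :=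
    Finset.exists_ne_map_eq_of_card_lt_of_maps_to hcardlt
      (fun x hx => Finset.mem_image_of_mem g hx)
  -- WLOG i < j
  wlog hlt : i < j generalizing i j
  · exact this j hj i hi hij.symm heq.symm (by omega)
  -- then f^{(j-i)l} z = z
  have key : hIter f (((j : ℤ) - i) * l) z = z := by
    have : hIter f (-((i : ℤ) * l)) (g i) = hIter f (-((i : ℤ) * l)) (g j) := by
      rw [heq]
    rw [hg] at this
    simp only [← hIter_add] at this
    have e1 : -((i : ℤ) * l) + (i : ℤ) * l = 0 := by ring
    have e2 : -((i : ℤ) * l) + (j : ℤ) * l = ((j : ℤ) - i) * l := by ring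
    rw [e1, e2] at this
    have h0 : hIter f 0 z = z := rfl
    rw [h0] at this
    exact this.symm
  -- convert to a natural iterate
  have hpos : (0 : ℤ) < ((j : ℤ) - i) * l := by
    have : (0 : ℤ) < (j : ℤ) - i := by omega
    exact mul_pos this (by omega)
  refine ⟨(((j : ℤ) - i) * l).toNat, by omega, ?_⟩
  have := hIter_natCast f (((j : ℤ) - i) * l).toNat z
  rw [Int.toNat_of_nonneg (by omega)] at this
  rw [← this, key]
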